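/- arXiv:1512.02563 — 2 statements merged into one kernel-verified Lean document; each statement's English description precedes it below -/
import Mathlib

section
/- Let (T, L)_p be a weakly generic resolution scheme at a point p ∈ ℝP² (T an unrooted full binary tree with every vertex of degree 1 or 3, L assigning to each edge a line through p, with adjacent edges receiving distinct lines). Then: (i) (T, L)_p admits a nonzero equilibrium force-load; (ii) any equilibrium force-load that is nonzero on some edge is nonzero on every edge; (iii) any two equilibrium force-loads on (T, L)_p are proportional; equivalently, the space of equilibrium force-loads is one-dimensional. -/
open scoped Classical

noncomputable section

abbrev V3 : Type := Fin 3 → ℝ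
abbrev Form : Type := V3 → V3 → ℝ

/-- The covector dual to `p` (`dp`). -/
def dualE (p : V3) : V3 → ℝ := fun x => ∑ i, p i * x i

/-- The wedge product `dp ∧ dq`, as a bilinear form on ℝ³. -/
def wedgeE (p q : V3) : Form :=
  fun x y => dualE p x * dualE q y - dualE p y * dualE q x

/-- The projective line through the points represented by `p` and `q`, as a subspace of ℝ³. -/
def projLine (p q : V3) : Submodule ℝ V3 := Submodule.span ℝ {p, q}

/-- `F` is a force whose line of force lies in the (2-dimensional) subspace `W`. -/
def AlongSub (F : Form) (W : Submodule ℝ V3) : Prop :=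
  ∃ a b : V3, a ∈ W ∧ b ∈ W ∧ F = wedgeE a b

/-- The assignment of lines to the edges of the tree is weakly generic: adjacent edges are
assigned distinct lines. -/
def WeaklyGeneric {V : Type} (G : SimpleGraph V) (L : Sym2 V → Submodule ℝ V3) : Prop :=
  ∀ u v w : V, G.Adj u v → G.Adj v w → u ≠ w → L s(u, v) ≠ L s(v, w)

/-- `F` is an equilibrium force-load on the resolution scheme `(T, L)`:
opposite forces along each edge with line of force `L(e)`, vanishing off edges,
summing to zero at every degree-3 vertex. -/
def IsEqTreeLoad {V : Type} [Fintype V] (G : SimpleGraph V) [DecidableRel G.Adj]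
    (L : Sym2 V → Submodule ℝ V3) (F : V → V → Form) : Prop :=
  (∀ u v, F u v = -F v u) ∧
  (∀ u v, ¬G.Adj u v → F u v = 0) ∧
  (∀ u v, G.Adj u v → AlongSub (F u v) (L s(u, v))) ∧
  (∀ v, G.degree v = 3 → ∑ u, F v u = 0)
lemma dualE_add (a b x : V3) : dualE (a + b) x = dualE a x + dualE b x := by
  simp [dualE, add_mul, Finset.sum_add_distrib]

lemma dualE_smul (c : ℝ) (a x : V3) : dualE (c • a) x = c * dualE a x := by
  simp [dualE, Finset.mul_sum, mul_assoc]

lemma wedge_smul_left (c : ℝ) (a b : V3) : wedgeE (c • a) b = c • wedgeE a b := by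
  funext x y; simp [wedgeE, dualE_smul, Pi.smul_apply, smul_eq_mul]; ring

lemma wedge_combo (p q : V3) (a1 a2 b1 b2 : ℝ) :
    wedgeE (a1 • p + a2 • q) (b1 • p + b2 • q) = (a1 * b2 - a2 * b1) • wedgeE p q := by
  funext x y
  simp [wedgeE, dualE_add, dualE_smul, Pi.smul_apply, smul_eq_mul]; ring

lemma sum_sq_eq_zero {z : V3} (h : dualE z z = 0) : z = 0 := by
  funext i
  have h2 : ∀ j ∈ Finset.univ, (0:ℝ) ≤ z j * z j := fun j _ => mul_self_nonneg _
  have := (Finset.sum_eq_zero_iff_of_nonneg h2).1 h i (Finset.mem_univ i)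
  have := mul_self_eq_zero.1 this
  simpa using this

lemma dualE_self_pos {p : V3} (hp : p ≠ 0) : 0 < dualE p p := by
  rcases lt_or_eq_of_le (Finset.sum_nonneg (fun j _ => mul_self_nonneg (p j))) with h | h
  · exact h
  · exact absurd (sum_sq_eq_zero h.symm) hp

lemma wedge_eq_zero_iff {p : V3} (hp : p ≠ 0) (x : V3) :
    wedgeE p x = 0 ↔ x ∈ Submodule.span ℝ {p} := by
  constructor
  · intro h
    have hpx : ∀ Y, dualE p p * dualE x Y = dualE p Y * dualE x p := by
      intro Y
      have := congrFun (congrFun h p) Y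
      simpa [wedgeE] using sub_eq_zero.1 (by simpa [wedgeE, Pi.zero_apply] using this)
    set c := dualE x p / dualE p p with hc
    have hpp := dualE_self_pos hp
    have hz : x - c • p = 0 := by
      apply sum_sq_eq_zero
      have hx : ∀ Y, dualE x Y = c * dualE p Y := by
        intro Y
        rw [hc, div_mul_eq_mul_div, eq_div_iff hpp.ne']
        nlinarith [hpx Y]
      have hd : ∀ Y, dualE (x - c • p) Y = 0 := by
        intro Y
        have : dualE (x - c • p) Y = dualE x Y - c * dualE p Y := by
          have := dualE_add (x - c • p) (c • p) Y
          simp at this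
          rw [dualE_smul] at this
          linarith
        rw [this, hx Y]; ring
      exact hd _
    have : x = c • p := by rwa [sub_eq_zero] at hz
    rw [this]
    exact Submodule.smul_mem _ _ (Submodule.mem_span_singleton_self p)
  · intro h
    obtain ⟨c, rfl⟩ := Submodule.mem_span_singleton.1 h
    funext X Y; simp [wedgeE, dualE_smul]; ring
lemma li_pair {p q : V3} (hp : p ≠ 0) (hq : q ∉ Submodule.span ℝ {p}) :
    LinearIndependent ℝ ![p, q] := by
  rw [LinearIndependent.pair_iff]
  intro s t hst
  by_cases ht : t = 0
  · subst ht
    simp at hst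
    rcases hst with h | h
    · exact ⟨h, rfl⟩
    · exact absurd h hp
  · exfalso
    apply hq
    have : q = (-s/t) • p := by
      have h1 : t • q = (-s) • p := by
        rw [neg_smul, eq_neg_iff_add_eq_zero, add_comm]; exact hst
      have := congrArg (fun z => (t⁻¹ : ℝ) • z) h1
      simp only [smul_smul, inv_mul_cancel₀ ht, one_smul] at this
      rw [this, div_eq_mul_inv, mul_comm]
    rw [this]
    exact Submodule.smul_mem _ _ (Submodule.mem_span_singleton_self p)

lemma span_pair_eq {p q : V3} (hp : p ≠ 0) (hq : q ∉ Submodule.span ℝ {p})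
    {W : Submodule ℝ V3} (hW : Module.finrank ℝ W = 2) (hpW : p ∈ W) (hqW : q ∈ W) :
    W = Submodule.span ℝ {p, q} := by
  have hle : Submodule.span ℝ {p, q} ≤ W := by
    rw [Submodule.span_le]
    intro x hx
    rcases hx with h | h
    · simp_all
    · simp_all
  have hr : Module.finrank ℝ (Submodule.span ℝ ({p, q} : Set V3)) = 2 := by
    have := finrank_span_eq_card (li_pair hp hq)
    have hrange : Set.range ![p, q] = {p, q} := by
      simp [Matrix.range_cons, Matrix.range_empty, Set.pair_comm]
    rw [hrange] at this
    simpa using this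
  exact (Submodule.eq_of_le_of_finrank_le hle (by rw [hW, hr])).symm
lemma finrank_span_pair {p q : V3} (hp : p ≠ 0) (hq : q ∉ Submodule.span ℝ {p}) :
    Module.finrank ℝ (Submodule.span ℝ ({p, q} : Set V3)) = 2 := by
  have := finrank_span_eq_card (li_pair hp hq)
  have hrange : Set.range ![p, q] = {p, q} := by
    simp [Matrix.range_cons, Matrix.range_empty, Set.pair_comm]
  rw [hrange] at this
  simpa using this

lemma lemE {p q2 q3 : V3} (hp : p ≠ 0) (hq2 : q2 ∉ Submodule.span ℝ {p})
    (hq3 : q3 ∉ Submodule.span ℝ {p})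
    (hne : Submodule.span ℝ ({p, q2} : Set V3) ≠ Submodule.span ℝ ({p, q3} : Set V3))
    {c2 c3 : ℝ} (h : c2 • q2 + c3 • q3 ∈ Submodule.span ℝ ({p} : Set V3)) :
    c2 = 0 ∧ c3 = 0 := by
  have key : ∀ q q' : V3, q ∉ Submodule.span ℝ {p} → q' ∉ Submodule.span ℝ {p} →
      Submodule.span ℝ ({p, q} : Set V3) ≠ Submodule.span ℝ ({p, q'} : Set V3) →
      ∀ c c' : ℝ, c • q + c' • q' ∈ Submodule.span ℝ ({p} : Set V3) → c' = 0 := by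
    intro q q' hq hq' hn c c' hm
    by_contra hc'
    apply hn
    have hq'mem : q' ∈ Submodule.span ℝ ({p, q} : Set V3) := by
      obtain ⟨t, ht⟩ := Submodule.mem_span_singleton.1 hm
      have : q' = c'⁻¹ • (t • p - c • q) := by
        rw [ht, add_sub_cancel_left, smul_smul, inv_mul_cancel₀ hc', one_smul]
      rw [this]
      have hpm : p ∈ Submodule.span ℝ ({p, q} : Set V3) :=
        Submodule.subset_span (by simp)
      have hqm : q ∈ Submodule.span ℝ ({p, q} : Set V3) :=
        Submodule.subset_span (by simp)
      exact Submodule.smul_mem _ _ (Submodule.sub_mem _ (Submodule.smul_mem _ _ hpm)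
        (Submodule.smul_mem _ _ hqm))
    have hle : Submodule.span ℝ ({p, q'} : Set V3) ≤ Submodule.span ℝ ({p, q} : Set V3) := by
      rw [Submodule.span_le]
      intro x hx
      rcases hx with hx | hx
      · exact hx ▸ Submodule.subset_span (by simp)
      · simp only [Set.mem_singleton_iff] at hx
        exact hx ▸ hq'mem
    exact (Submodule.eq_of_le_of_finrank_le hle
      (by rw [finrank_span_pair hp hq, finrank_span_pair hp hq'])).symm
  have h3 : c3 = 0 := key q2 q3 hq2 hq3 hne c2 c3 h
  have h2 : c2 = 0 := by
    refine key q3 q2 hq3 hq2 (Ne.symm hne) c3 c2 ?_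
    rw [add_comm]; exact h
  exact ⟨h2, h3⟩

/-- wedge with p on the left, as a linear map in the second argument. -/
def wedgeLin (p : V3) : V3 →ₗ[ℝ] Form where
  toFun q := wedgeE p q
  map_add' a b := by funext x y; simp [wedgeE, dualE_add]; ring
  map_smul' c a := by funext x y; simp [wedgeE, dualE_smul]; ring
/-- For a weakly generic resolution scheme `(T, L)_p` (an unrooted full binary tree with a line
through `p` attached to every edge, adjacent edges carrying distinct lines):
(i) there is a nonzero equilibrium force-load; (ii) an equilibrium force-load nonzero on some
edge is nonzero on every edge; (iii) any two equilibrium force-loads are proportional. -/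
theorem stmt14 {V : Type} [Fintype V] [DecidableEq V] [Nonempty V]
    (G : SimpleGraph V) [DecidableRel G.Adj] (p : V3) (hp : p ≠ 0)
    (L : Sym2 V → Submodule ℝ V3)
    (htree : G.IsTree) (hdeg : ∀ v, G.degree v = 1 ∨ G.degree v = 3)
    (hL2 : ∀ u v, G.Adj u v → Module.finrank ℝ (L s(u, v)) = 2)
    (hLp : ∀ u v, G.Adj u v → p ∈ L s(u, v))
    (hWG : WeaklyGeneric G L) :
    (∃ F : V → V → Form, IsEqTreeLoad G L F ∧ F ≠ 0) ∧
    (∀ F : V → V → Form, IsEqTreeLoad G L F →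
      (∃ u v, G.Adj u v ∧ F u v ≠ 0) → ∀ u v, G.Adj u v → F u v ≠ 0) ∧
    (∀ F F' : V → V → Form, IsEqTreeLoad G L F → IsEqTreeLoad G L F' →
      ∃ c c' : ℝ, ¬(c = 0 ∧ c' = 0) ∧ c • F = c' • F') := by
  classical
  -- choose a vector q e on each edge line, independent from p
  obtain ⟨q, hq⟩ : ∃ q : Sym2 V → V3, ∀ u v, G.Adj u v →
      q s(u, v) ∈ L s(u, v) ∧ q s(u, v) ∉ Submodule.span ℝ {p} := by
    refine ⟨fun e => if h : ∃ x, x ∈ L e ∧ x ∉ Submodule.span ℝ {p} then h.choose else 0, ?_⟩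
    intro u v huv
    have hex : ∃ x, x ∈ L s(u, v) ∧ x ∉ Submodule.span ℝ {p} := by
      by_contra hc
      push_neg at hc
      have hle : L s(u, v) ≤ Submodule.span ℝ {p} := fun x hx => hc x hx
      have := Submodule.finrank_mono hle
      rw [hL2 u v huv, finrank_span_singleton hp] at this
      omega
    simpa [dif_pos hex] using hex.choose_spec
  have hspan : ∀ u v, G.Adj u v → L s(u, v) = Submodule.span ℝ {p, q s(u, v)} :=
    fun u v h => span_pair_eq hp (hq u v h).2 (hL2 u v h) (hLp u v h) (hq u v h).1
  have homega : ∀ u v, G.Adj u v → wedgeE p (q s(u, v)) ≠ 0 :=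
    fun u v h hw => (hq u v h).2 ((wedge_eq_zero_iff hp _).1 hw)
  have hrep : ∀ (F : Form) (u v : V), G.Adj u v → AlongSub F (L s(u, v)) →
      ∃ c : ℝ, F = c • wedgeE p (q s(u, v)) := by
    rintro F u v huv ⟨a, b, ha, hb, hF⟩
    rw [hspan u v huv] at ha hb
    obtain ⟨a1, a2, ha'⟩ := Submodule.mem_span_pair.1 ha
    obtain ⟨b1, b2, hb'⟩ := Submodule.mem_span_pair.1 hb
    exact ⟨a1 * b2 - a2 * b1, by rw [hF, ← ha', ← hb', wedge_combo]⟩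
  have hspan_ne : ∀ v u u', G.Adj v u → G.Adj v u' → u ≠ u' →
      Submodule.span ℝ ({p, q s(v, u)} : Set V3) ≠ Submodule.span ℝ ({p, q s(v, u')} : Set V3) := by
    intro v u u' h1 h2 hne
    rw [← hspan v u h1, ← hspan v u' h2]
    have := hWG u v u' h1.symm h2 hne
    rwa [Sym2.eq_swap] at this
  have hpair : ∀ v y z, G.Adj v y → G.Adj v z → y ≠ z → ∀ cy cz : ℝ,
      cy • wedgeE p (q s(v, y)) + cz • wedgeE p (q s(v, z)) = 0 → cy = 0 ∧ cz = 0 := by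
    intro v y z hy hz hne cy cz hsum
    have hw : wedgeE p (cy • q s(v, y) + cz • q s(v, z)) = 0 := by
      have : wedgeE p (cy • q s(v, y) + cz • q s(v, z)) =
          cy • wedgeE p (q s(v, y)) + cz • wedgeE p (q s(v, z)) := by
        have h1 := map_add (wedgeLin p) (cy • q s(v, y)) (cz • q s(v, z))
        have h2 := map_smul (wedgeLin p) cy (q s(v, y))
        have h3 := map_smul (wedgeLin p) cz (q s(v, z))
        simp only [wedgeLin, LinearMap.coe_mk, AddHom.coe_mk] at h1 h2 h3
        rw [h1, h2, h3]
      rw [this, hsum]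
    exact lemE hp (hq v y hy).2 (hq v z hz).2 (hspan_ne v y z hy hz hne)
      ((wedge_eq_zero_iff hp _).1 hw)
  -- zero at one edge at a vertex propagates to all edges at that vertex
  have hvert : ∀ F, IsEqTreeLoad G L F → ∀ v u0, G.Adj v u0 → F v u0 = 0 →
      ∀ u, G.Adj v u → F v u = 0 := by
    intro F hF v u0 h0 hzero u hu
    obtain ⟨hanti, hoff, halong, hsum3⟩ := hF
    rcases hdeg v with h1 | h3
    · have huu0 : u = u0 := by
        have hcard : (G.neighborFinset v).card = 1 := by
          rwa [G.card_neighborFinset_eq_degree]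
        obtain ⟨w, hw⟩ := Finset.card_eq_one.1 hcard
        have hu' : u ∈ G.neighborFinset v := (G.mem_neighborFinset _ _).2 hu
        have hu0' : u0 ∈ G.neighborFinset v := (G.mem_neighborFinset _ _).2 h0
        rw [hw, Finset.mem_singleton] at hu' hu0'
        rw [hu', hu0']
      rwa [huu0]
    · have hcard : (G.neighborFinset v).card = 3 := by
        rwa [G.card_neighborFinset_eq_degree]
      obtain ⟨a, b, c, hab, hac, hbc, habc⟩ := Finset.card_eq_three.1 hcard
      have hadj : ∀ x, x ∈ G.neighborFinset v → G.Adj v x :=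
        fun x hx => (G.mem_neighborFinset _ _).1 hx
      have ha : G.Adj v a := hadj a (by rw [habc]; simp)
      have hb : G.Adj v b := hadj b (by rw [habc]; simp)
      have hc : G.Adj v c := hadj c (by rw [habc]; simp)
      have hsum : F v a + F v b + F v c = 0 := by
        have hsub : ∑ x ∈ G.neighborFinset v, F v x = ∑ x, F v x :=
          Finset.sum_subset (Finset.subset_univ _)
            (fun x _ hx => hoff v x (fun h => hx ((G.mem_neighborFinset _ _).2 h)))
        rw [habc] at hsub
        rw [Finset.sum_insert (by simp [hab, hac]), Finset.sum_insert (by simp [hbc]),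
          Finset.sum_singleton] at hsub
        rw [← add_assoc] at hsub
        rw [hsub]
        exact hsum3 v h3
      have hmem : ∀ x, G.Adj v x → x = a ∨ x = b ∨ x = c := by
        intro x hx
        have : x ∈ G.neighborFinset v := (G.mem_neighborFinset _ _).2 hx
        rw [habc] at this
        simpa using this
      have hzero2 : ∀ y z, G.Adj v y → G.Adj v z → y ≠ z → F v y + F v z = 0 →
          F v y = 0 ∧ F v z = 0 := by
        intro y z hy hz hyz hs
        obtain ⟨cy, hcy⟩ := hrep (F v y) v y hy (halong v y hy)
        obtain ⟨cz, hcz⟩ := hrep (F v z) v z hz (halong v z hz)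
        rw [hcy, hcz] at hs
        obtain ⟨h1, h2⟩ := hpair v y z hy hz hyz cy cz hs
        rw [hcy, hcz, h1, h2, zero_smul, zero_smul]
        exact ⟨rfl, rfl⟩
      have key : F v a = 0 ∧ F v b = 0 ∧ F v c = 0 := by
        rcases hmem u0 h0 with rfl | rfl | rfl
        · have hbc' : F v b + F v c = 0 := by rw [hzero, zero_add] at hsum; exact hsum
          obtain ⟨h1, h2⟩ := hzero2 b c hb hc hbc hbc'
          exact ⟨hzero, h1, h2⟩
        · have hac' : F v a + F v c = 0 := by
            rw [hzero, add_zero] at hsum; exact hsum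
          obtain ⟨h1, h2⟩ := hzero2 a c ha hc hac hac'
          exact ⟨h1, hzero, h2⟩
        · have hab' : F v a + F v b = 0 := by rw [hzero, add_zero] at hsum; exact hsum
          obtain ⟨h1, h2⟩ := hzero2 a b ha hb hab hab'
          exact ⟨h1, h2, hzero⟩
      rcases hmem u hu with rfl | rfl | rfl
      · exact key.1
      · exact key.2.1
      · exact key.2.2
  -- zero on one edge propagates along the tree to all edges
  have hprop : ∀ F, IsEqTreeLoad G L F → ∀ u0 v0, G.Adj u0 v0 → F u0 v0 = 0 →
      ∀ x y, G.Adj x y → F x y = 0 := by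
    intro F hF u0 v0 hadj h0 x y hxy
    have hZ : ∀ x, (∀ z, G.Adj x z → F x z = 0) → ∀ y, G.Adj x y →
        (∀ z, G.Adj y z → F y z = 0) := by
      intro x hx y hxy
      apply hvert F hF y x hxy.symm
      rw [hF.1 y x, hx y hxy, neg_zero]
    have hZu0 : ∀ z, G.Adj u0 z → F u0 z = 0 := hvert F hF u0 v0 hadj h0
    have main : ∀ (a w : V) (pw : G.Walk a w), (∀ z, G.Adj a z → F a z = 0) →
        ∀ z, G.Adj w z → F w z = 0 := by
      intro a w pw
      induction pw with
      | nil => exact fun h => h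
      | @cons u b w h pw ih => exact fun hyp => ih (hZ u hyp b h)
    obtain ⟨pw⟩ := htree.isConnected.preconnected u0 x
    exact main u0 x pw hZu0 y hxy
  have part2 : ∀ F : V → V → Form, IsEqTreeLoad G L F →
      (∃ u v, G.Adj u v ∧ F u v ≠ 0) → ∀ u v, G.Adj u v → F u v ≠ 0 := by
    rintro F hF ⟨u0, v0, h0, hne⟩ u v huv hcontra
    exact hne (hprop F hF u v huv hcontra u0 v0 h0)
  refine ⟨?_, part2, ?_⟩
  · -- (i) existence of a nonzero equilibrium force-load
    set σ : V → ℕ := fun v => ((Fintype.equivFin V) v : ℕ) with hσ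
    have hσinj : Function.Injective σ := fun a b h => (Fintype.equivFin V).injective (Fin.ext h)
    set sgn : V → V → ℝ := fun u v => if σ u < σ v then 1 else -1 with hsgn
    have hsgn_anti : ∀ u v : V, u ≠ v → sgn u v = -sgn v u := by
      intro u v huv
      have hne : σ u ≠ σ v := fun h => huv (hσinj h)
      simp only [hsgn]
      rcases lt_or_gt_of_ne hne with h | h
      · rw [if_pos h, if_neg (not_lt_of_gt h), neg_neg]
      · rw [if_neg (not_lt_of_gt h), if_pos h]
    have hsgn_ne : ∀ u v, sgn u v ≠ 0 := by
      intro u v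
      by_cases h : σ u < σ v <;> simp [hsgn, h]
    -- counting
    have hedge : G.edgeFinset.card + 1 = Fintype.card V := by
      have h := htree.card_edgeFinset
      have hpos : 0 < Fintype.card V := Fintype.card_pos
      have h2 : 1 ≤ Fintype.card V := hpos
      omega
    have hdeg_sum : ∑ v, G.degree v = 2 * G.edgeFinset.card :=
      G.sum_degrees_eq_twice_card_edges
    set S3 : Finset V := Finset.univ.filter (fun v => G.degree v = 3) with hS3
    set S1 : Finset V := Finset.univ.filter (fun v => G.degree v = 1) with hS1
    have hdisj : Disjoint S1 S3 := by
      rw [Finset.disjoint_left]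
      intro a h1 h3
      rw [hS1, Finset.mem_filter] at h1
      rw [hS3, Finset.mem_filter] at h3
      omega
    have hunion : S1 ∪ S3 = Finset.univ := by
      ext v
      simp only [hS1, hS3, Finset.mem_union, Finset.mem_filter, Finset.mem_univ, true_and]
      exact ⟨fun _ => trivial, fun _ => hdeg v⟩
    have hpart : S1.card + S3.card = Fintype.card V := by
      rw [← Finset.card_union_of_disjoint hdisj, hunion, Finset.card_univ]
    have hsum13 : S1.card + 3 * S3.card = 2 * G.edgeFinset.card := by
      have hd1 : ∀ v ∈ S1, G.degree v = 1 := by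
        intro v hv
        rw [hS1, Finset.mem_filter] at hv
        exact hv.2
      have hd3 : ∀ v ∈ S3, G.degree v = 3 := by
        intro v hv
        rw [hS3, Finset.mem_filter] at hv
        exact hv.2
      have h1 : ∑ v ∈ S1, G.degree v = S1.card := by
        rw [Finset.sum_congr rfl hd1, Finset.sum_const, smul_eq_mul, mul_one]
      have h3 : ∑ v ∈ S3, G.degree v = 3 * S3.card := by
        rw [Finset.sum_congr rfl hd3, Finset.sum_const, smul_eq_mul, mul_comm]
      have := Finset.sum_union hdisj (f := fun v => G.degree v)
      rw [hunion, h1, h3] at this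
      rw [← this, hdeg_sum]
    have hcount : 2 * S3.card + 2 = Fintype.card V := by omega
    -- ranks
    have hQrank : Module.finrank ℝ (V3 ⧸ Submodule.span ℝ ({p} : Set V3)) = 2 := by
      have h1 := Submodule.finrank_quotient_add_finrank (Submodule.span ℝ ({p} : Set V3))
      rw [finrank_span_singleton hp] at h1
      have h3 : Module.finrank ℝ V3 = 3 := by
        rw [Module.finrank_pi]; simp
      omega
    -- the linear constraint map
    set Φ : (↥G.edgeFinset → ℝ) →ₗ[ℝ]
        ({v : V // G.degree v = 3} → V3 ⧸ Submodule.span ℝ ({p} : Set V3)) :=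
      { toFun := fun f vI => ∑ u ∈ (G.neighborFinset vI.1).attach,
          f ⟨s(vI.1, u.1), by
              rw [SimpleGraph.mem_edgeFinset, SimpleGraph.mem_edgeSet]
              exact (G.mem_neighborFinset _ _).1 u.2⟩ •
            (sgn vI.1 u.1 • Submodule.Quotient.mk (q s(vI.1, u.1))),
        map_add' := by
          intro f g
          funext vI
          simp [add_smul, Finset.sum_add_distrib]
        map_smul' := by
          intro c f
          funext vI
          simp [mul_smul, Finset.smul_sum] } with hΦ
    have hrankdom : Module.finrank ℝ (↥G.edgeFinset → ℝ) = G.edgeFinset.card := by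
      rw [Module.finrank_pi]
      exact Fintype.card_coe _
    have hrankcod : Module.finrank ℝ
        ({v : V // G.degree v = 3} → V3 ⧸ Submodule.span ℝ ({p} : Set V3)) = 2 * S3.card := by
      have hcard : Fintype.card {v : V // G.degree v = 3} = S3.card := by
        rw [hS3]
        exact Fintype.card_subtype _
      rw [Module.finrank_pi_fintype, Finset.sum_const, hQrank, Finset.card_univ, hcard,
        smul_eq_mul]
      omega
    have hker : ∃ f : ↥G.edgeFinset → ℝ, Φ f = 0 ∧ f ≠ 0 := by
      by_contra hcon
      push_neg at hcon
      have hinj : Function.Injective Φ := by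
        rw [← LinearMap.ker_eq_bot]
        rw [Submodule.eq_bot_iff]
        intro x hx
        exact hcon x (LinearMap.mem_ker.1 hx)
      have hle := LinearMap.finrank_le_finrank_of_injective hinj
      rw [hrankdom, hrankcod] at hle
      omega
    obtain ⟨f, hfker, hfne⟩ := hker
    set f' : Sym2 V → ℝ := fun e => if h : e ∈ G.edgeFinset then f ⟨e, h⟩ else 0 with hf'
    set F : V → V → Form := fun u v =>
      if h : G.Adj u v then (sgn u v * f' s(u, v)) • wedgeE p (q s(u, v)) else 0 with hFdef
    have hoff : ∀ u v, ¬G.Adj u v → F u v = 0 := by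
      intro u v h
      simp only [hFdef, dif_neg h]
    have hanti : ∀ u v, F u v = -F v u := by
      intro u v
      by_cases h : G.Adj u v
      · simp only [hFdef, dif_pos h, dif_pos h.symm]
        rw [show s(v, u) = s(u, v) from Sym2.eq_swap]
        rw [hsgn_anti u v h.ne, neg_mul, neg_smul]
      · rw [hoff u v h, hoff v u (fun h' => h h'.symm), neg_zero]
    have halong : ∀ u v, G.Adj u v → AlongSub (F u v) (L s(u, v)) := by
      intro u v h
      refine ⟨(sgn u v * f' s(u, v)) • p, q s(u, v),
        Submodule.smul_mem _ _ (hLp u v h), (hq u v h).1, ?_⟩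
      simp only [hFdef, dif_pos h]
      rw [wedge_smul_left]
    have hsum0 : ∀ v, G.degree v = 3 → ∑ u, F v u = 0 := by
      intro v h3
      have hsub : ∑ x ∈ G.neighborFinset v, F v x = ∑ x, F v x :=
        Finset.sum_subset (Finset.subset_univ _)
          (fun x _ hx => hoff v x (fun h => hx ((G.mem_neighborFinset _ _).2 h)))
      rw [← hsub]
      have hterm : ∀ x ∈ G.neighborFinset v, F v x =
          wedgeLin p ((sgn v x * f' s(v, x)) • q s(v, x)) := by
        intro x hx
        have hadj : G.Adj v x := (G.mem_neighborFinset _ _).1 hx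
        simp only [hFdef, dif_pos hadj]
        rw [map_smul]
        rfl
      rw [Finset.sum_congr rfl hterm, ← map_sum]
      have hmem : (∑ x ∈ G.neighborFinset v, (sgn v x * f' s(v, x)) • q s(v, x)) ∈
          Submodule.span ℝ ({p} : Set V3) := by
        rw [← Submodule.Quotient.mk_eq_zero]
        have hmk : (Submodule.Quotient.mk
              (∑ x ∈ G.neighborFinset v, (sgn v x * f' s(v, x)) • q s(v, x)) :
              V3 ⧸ Submodule.span ℝ ({p} : Set V3)) =
            ∑ x ∈ G.neighborFinset v,
              (sgn v x * f' s(v, x)) • (Submodule.Quotient.mk (q s(v, x)) :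
                V3 ⧸ Submodule.span ℝ ({p} : Set V3)) := by
          rw [show (Submodule.Quotient.mk :
              V3 → V3 ⧸ Submodule.span ℝ ({p} : Set V3)) =
              (Submodule.span ℝ ({p} : Set V3)).mkQ from rfl]
          rw [map_sum]
          exact Finset.sum_congr rfl (fun x _ => by rw [map_smul])
        have hPhi : Φ f ⟨v, h3⟩ = ∑ x ∈ G.neighborFinset v,
            (sgn v x * f' s(v, x)) • (Submodule.Quotient.mk (q s(v, x)) :
              V3 ⧸ Submodule.span ℝ ({p} : Set V3)) := by
          simp only [hΦ, LinearMap.coe_mk, AddHom.coe_mk]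
          rw [← Finset.sum_attach (G.neighborFinset v) (fun x =>
            (sgn v x * f' s(v, x)) • (Submodule.Quotient.mk (q s(v, x)) :
              V3 ⧸ Submodule.span ℝ ({p} : Set V3)))]
          apply Finset.sum_congr rfl
          intro x _
          have hmemE : s(v, x.1) ∈ G.edgeFinset := by
            rw [SimpleGraph.mem_edgeFinset, SimpleGraph.mem_edgeSet]
            exact (G.mem_neighborFinset _ _).1 x.2
          have hfeq : f ⟨s(v, x.1), hmemE⟩ = f' s(v, x.1) := by
            rw [hf']
            simp only [dif_pos hmemE]
          rw [hfeq, smul_smul, mul_comm]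
        rw [hmk, ← hPhi, hfker]
        rfl
      exact (wedge_eq_zero_iff hp _).2 hmem
    have hFne : F ≠ 0 := by
      obtain ⟨e, he⟩ := Function.ne_iff.1 hfne
      obtain ⟨e', hemem⟩ := e
      induction e' using Sym2.ind with
      | _ u v =>
        have hadj : G.Adj u v := by
          rwa [SimpleGraph.mem_edgeFinset, SimpleGraph.mem_edgeSet] at hemem
        have hf'uv : f' s(u, v) ≠ 0 := by
          rw [hf']
          simp only [dif_pos hemem]
          simpa using he
        have hFuv : F u v ≠ 0 := by
          simp only [hFdef, dif_pos hadj]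
          exact smul_ne_zero (mul_ne_zero (hsgn_ne u v) hf'uv) (homega u v hadj)
        intro h0
        apply hFuv
        rw [h0]
        rfl
    exact ⟨F, ⟨hanti, hoff, halong, hsum0⟩, hFne⟩
  · -- (iii) proportionality
    intro F F' hF hF'
    by_cases hF'0 : F' = 0
    · exact ⟨0, 1, by simp, by rw [hF'0, zero_smul, smul_zero]⟩
    by_cases hF0 : F = 0
    · exact ⟨1, 0, by simp, by rw [hF0, zero_smul, smul_zero]⟩
    -- both nonzero: find a common edge where both are nonzero
    obtain ⟨u0, hu0⟩ := Function.ne_iff.1 hF0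
    obtain ⟨v0, hv0⟩ := Function.ne_iff.1 hu0
    have hadj0 : G.Adj u0 v0 := by
      by_contra h
      exact hv0 (by rw [hF.2.1 u0 v0 h]; rfl)
    have hFuv : F u0 v0 ≠ 0 := fun h => hv0 (by rw [h]; rfl)
    obtain ⟨x0, hx0⟩ := Function.ne_iff.1 hF'0
    obtain ⟨y0, hy0⟩ := Function.ne_iff.1 hx0
    have hadj0' : G.Adj x0 y0 := by
      by_contra h
      exact hy0 (by rw [hF'.2.1 x0 y0 h]; rfl)
    have hF'xy : F' x0 y0 ≠ 0 := fun h => hy0 (by rw [h]; rfl)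
    have hF'uv : F' u0 v0 ≠ 0 :=
      part2 F' hF' ⟨x0, y0, hadj0', hF'xy⟩ u0 v0 hadj0
    -- represent both on the common edge
    obtain ⟨a, ha⟩ := hrep (F u0 v0) u0 v0 hadj0 (hF.2.2.1 u0 v0 hadj0)
    obtain ⟨a', ha'⟩ := hrep (F' u0 v0) u0 v0 hadj0 (hF'.2.2.1 u0 v0 hadj0)
    have hane : a ≠ 0 := by
      intro h
      exact hFuv (by rw [ha, h, zero_smul])
    have ha'ne : a' ≠ 0 := by
      intro h
      exact hF'uv (by rw [ha', h, zero_smul])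
    -- the difference load
    set H : V → V → Form := fun u v => a' • F u v - a • F' u v with hH
    have hHload : IsEqTreeLoad G L H := by
      obtain ⟨h1, h2, h3, h4⟩ := hF
      obtain ⟨h1', h2', h3', h4'⟩ := hF'
      refine ⟨?_, ?_, ?_, ?_⟩
      · intro u v
        simp only [hH]
        rw [h1 u v, h1' u v]
        funext x y
        simp only [Pi.sub_apply, Pi.smul_apply, Pi.neg_apply, smul_eq_mul]
        ring
      · intro u v h
        simp only [hH]
        rw [h2 u v h, h2' u v h, smul_zero, smul_zero, sub_zero]
      · intro u v h
        obtain ⟨c, hc⟩ := hrep (F u v) u v h (h3 u v h)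
        obtain ⟨c', hc'⟩ := hrep (F' u v) u v h (h3' u v h)
        refine ⟨(a' * c - a * c') • p, q s(u, v),
          Submodule.smul_mem _ _ (hLp u v h), (hq u v h).1, ?_⟩
        simp only [hH]
        rw [hc, hc', wedge_smul_left, smul_smul, smul_smul, ← sub_smul]
      · intro v h3v
        simp only [hH]
        rw [Finset.sum_sub_distrib, ← Finset.smul_sum, ← Finset.smul_sum,
          h4 v h3v, h4' v h3v, smul_zero, smul_zero, sub_zero]
    have hH0 : H u0 v0 = 0 := by
      simp only [hH]
      rw [ha, ha', smul_smul, smul_smul, mul_comm, sub_self]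
    have hHzero : ∀ u v, H u v = 0 := by
      intro u v
      by_cases h : G.Adj u v
      · exact hprop H hHload u0 v0 hadj0 hH0 u v h
      · exact hHload.2.1 u v h
    refine ⟨a', a, fun h => hane h.2, ?_⟩
    funext u v
    have := hHzero u v
    simp only [hH] at this
    have heq : a' • F u v = a • F' u v := by
      rwa [sub_eq_zero] at this
    simp only [Pi.smul_apply]
    exact heq
end
end

section
/- In a weakly generic resolution scheme (T, L)_p with a nonzero equilibrium force-load F, for every interior edge e of T, the sum F₁ + … + F_r of the forces at all leaves lying in one connected component of T ∖ {e} is nonzero and its line of force equals L(e). -/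
open scoped Classical

noncomputable section

/-! ### Auxiliary algebraic lemmas -/

lemma dualE_add_left (a b y : V3) : dualE (a + b) y = dualE a y + dualE b y := by
  simp only [dualE, Pi.add_apply, add_mul, Finset.sum_add_distrib]

lemma dualE_smul_left (r : ℝ) (a y : V3) : dualE (r • a) y = r * dualE a y := by
  simp only [dualE, Pi.smul_apply, smul_eq_mul, Finset.mul_sum]
  exact Finset.sum_congr rfl (by intros; ring)

lemma wedgeE_add_right (p a b : V3) : wedgeE p (a + b) = wedgeE p a + wedgeE p b := by
  funext x y; simp only [wedgeE, dualE_add_left, Pi.add_apply]; ring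

lemma wedgeE_smul_right (p : V3) (r : ℝ) (a : V3) : wedgeE p (r • a) = r • wedgeE p a := by
  funext x y; simp only [wedgeE, dualE_smul_left, Pi.smul_apply, smul_eq_mul]; ring

lemma wedgeE_self (a : V3) : wedgeE a a = 0 := by
  funext x y; simp [wedgeE]; ring

lemma wedgeE_antisymm (a b : V3) : wedgeE a b = - wedgeE b a := by
  funext x y; simp [wedgeE]; ring

lemma wedgeE_smul_left (p : V3) (r : ℝ) (a : V3) : wedgeE (r • a) p = r • wedgeE a p := by
  funext x y; simp only [wedgeE, dualE_smul_left, Pi.smul_apply, smul_eq_mul]; ring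

lemma dualE_single (p : V3) (i : Fin 3) : dualE p (Pi.single i 1) = p i := by
  simp [dualE, Pi.single_apply, mul_ite]

lemma wedgeE_zero_iff {p q : V3} (hp : p ≠ 0) :
    wedgeE p q = 0 ↔ q ∈ Submodule.span ℝ ({p} : Set V3) := by
  constructor
  · intro h
    have key : ∀ x y, dualE p x * dualE q y = dualE p y * dualE q x := by
      intro x y
      have := congrFun (congrFun h x) y
      simpa [wedgeE, sub_eq_zero] using this
    rw [Submodule.mem_span_singleton]
    refine ⟨dualE q p / dualE p p, ?_⟩
    funext i
    have h1 := key p (Pi.single i 1)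
    rw [dualE_single, dualE_single] at h1
    have h2 : 0 < dualE p p := dualE_self_pos hp
    field_simp
    rw [Pi.smul_apply, smul_eq_mul, div_mul_eq_mul_div, div_eq_iff h2.ne']
    linarith [h1]
  · intro h
    rw [Submodule.mem_span_singleton] at h
    obtain ⟨r, rfl⟩ := h
    rw [wedgeE_smul_right]
    have : wedgeE p p = 0 := wedgeE_self p
    rw [this, smul_zero]

lemma exists_wedge_p {p : V3} (hp : p ≠ 0) {W : Submodule ℝ V3}
    (hpW : p ∈ W) (hW : Module.finrank ℝ W = 2) {a b : V3} (ha : a ∈ W) (hb : b ∈ W) :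
    ∃ c ∈ W, wedgeE a b = wedgeE p c := by
  by_cases hsp : a ∈ Submodule.span ℝ ({p} : Set V3)
  · obtain ⟨r, rfl⟩ := Submodule.mem_span_singleton.mp hsp
    refine ⟨r • b, W.smul_mem r hb, ?_⟩
    rw [wedgeE_smul_left, wedgeE_smul_right]
  · have hli : LinearIndependent ℝ ![a, p] := by
      rw [linearIndependent_fin2]
      refine ⟨hp, fun s hs => hsp ?_⟩
      simp only [Matrix.cons_val_one, Matrix.head_cons, Matrix.cons_val_zero] at hs
      exact hs ▸ Submodule.smul_mem _ s (Submodule.mem_span_singleton_self p)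
    have hrange : Set.range ![a, p] = ({a, p} : Set V3) := by
      ext x
      constructor
      · rintro ⟨i, rfl⟩; fin_cases i <;> simp
      · rintro (rfl | rfl)
        exacts [⟨0, rfl⟩, ⟨1, rfl⟩]
    have hspan : Submodule.span ℝ ({a, p} : Set V3) = W := by
      apply Submodule.eq_of_le_of_finrank_le
      · rw [Submodule.span_le]; rintro x (rfl | rfl)
        · exact ha
        · exact hpW
      · rw [hW, ← hrange, finrank_span_eq_card hli]
        simp
    have hbmem : b ∈ Submodule.span ℝ ({a, p} : Set V3) := hspan ▸ hb
    obtain ⟨m, n, hmn⟩ := Submodule.mem_span_pair.mp hbmem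
    refine ⟨(-n) • a, W.smul_mem _ ha, ?_⟩
    rw [← hmn, wedgeE_add_right, wedgeE_smul_right, wedgeE_smul_right, wedgeE_self,
      smul_zero, zero_add, wedgeE_smul_right]
    rw [show wedgeE a p = - wedgeE p a from wedgeE_antisymm a p]
    simp [smul_smul, neg_smul]

lemma inf_le_span {p : V3} (hp : p ≠ 0) {W₁ W₂ : Submodule ℝ V3}
    (h1 : p ∈ W₁) (h2 : p ∈ W₂) (hr1 : Module.finrank ℝ W₁ = 2)
    (hr2 : Module.finrank ℝ W₂ = 2) (hne : W₁ ≠ W₂) :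
    W₁ ⊓ W₂ ≤ Submodule.span ℝ ({p} : Set V3) := by
  have hsp : Submodule.span ℝ ({p} : Set V3) ≤ W₁ ⊓ W₂ := by
    rw [Submodule.span_le]; rintro x rfl; exact ⟨h1, h2⟩
  have hle : Module.finrank ℝ ↥(W₁ ⊓ W₂) ≤ 1 := by
    by_contra hgt
    push_neg at hgt
    have hle2 : Module.finrank ℝ ↥(W₁ ⊓ W₂) ≤ 2 := hr1 ▸ Submodule.finrank_mono inf_le_left
    have heq : Module.finrank ℝ ↥(W₁ ⊓ W₂) = 2 := le_antisymm hle2 hgt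
    have e1 : W₁ ⊓ W₂ = W₁ := Submodule.eq_of_le_of_finrank_le inf_le_left (by rw [heq, hr1])
    have e2 : W₁ ⊓ W₂ = W₂ := Submodule.eq_of_le_of_finrank_le inf_le_right (by rw [heq, hr2])
    exact hne (e1 ▸ e2)
  have : Submodule.span ℝ ({p} : Set V3) = W₁ ⊓ W₂ :=
    Submodule.eq_of_le_of_finrank_le hsp (by rw [finrank_span_singleton hp]; exact hle)
  exact this.ge

/-! ### Propagation of vanishing of the force-load -/

lemma local_prop {V : Type} [Fintype V] [DecidableEq V]
    (G : SimpleGraph V) [DecidableRel G.Adj] {p : V3} (hp : p ≠ 0)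
    (L : Sym2 V → Submodule ℝ V3)
    (hL2 : ∀ u v, G.Adj u v → Module.finrank ℝ (L s(u, v)) = 2)
    (hLp : ∀ u v, G.Adj u v → p ∈ L s(u, v))
    (hWG : WeaklyGeneric G L)
    {F : V → V → Form} (hF : IsEqTreeLoad G L F)
    {x y z : V} (hx3 : G.degree x = 3) (hxy : G.Adj x y) (hzero : F x y = 0)
    (hxz : G.Adj x z) : F x z = 0 := by
  by_cases hyz : y = z
  · exact hyz ▸ hzero
  set N := G.neighborFinset x with hN
  have hyN : y ∈ N := (SimpleGraph.mem_neighborFinset G x y).mpr hxy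
  have hzN : z ∈ N := (SimpleGraph.mem_neighborFinset G x z).mpr hxz
  have hsub : ({y, z} : Finset V) ⊆ N := by
    intro w hw
    rcases Finset.mem_insert.mp hw with rfl | hw
    · exact hyN
    · exact (Finset.mem_singleton.mp hw) ▸ hzN
  have hcard : N.card = 3 := hx3
  have hcard1 : (N \ {y, z}).card = 1 := by
    rw [Finset.card_sdiff_of_subset hsub, hcard, Finset.card_pair hyz]
  obtain ⟨t, ht⟩ := Finset.card_eq_one.mp hcard1
  have htmem : t ∈ N \ ({y, z} : Finset V) := ht ▸ Finset.mem_singleton_self t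
  have htN : t ∈ N := (Finset.mem_sdiff.mp htmem).1
  have htyz : t ≠ y ∧ t ≠ z := by
    have := (Finset.mem_sdiff.mp htmem).2
    simp only [Finset.mem_insert, Finset.mem_singleton] at this
    push_neg at this
    exact this
  have hxt : G.Adj x t := (SimpleGraph.mem_neighborFinset G x t).mp htN
  have hsumN : ∑ w ∈ N, F x w = 0 := by
    rw [← hF.2.2.2 x hx3]
    exact Finset.sum_subset (Finset.subset_univ N)
      (fun w _ hw => hF.2.1 x w (fun h => hw ((SimpleGraph.mem_neighborFinset G x w).mpr h)))
  have hsplit : ∑ w ∈ N \ {y, z}, F x w + ∑ w ∈ ({y, z} : Finset V), F x w = ∑ w ∈ N, F x w :=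
    Finset.sum_sdiff hsub
  rw [ht, Finset.sum_singleton, Finset.sum_pair hyz, hzero, hsumN, zero_add] at hsplit
  have hWz : p ∈ L s(x, z) := hLp x z hxz
  have hWt : p ∈ L s(x, t) := hLp x t hxt
  have hWne : L s(x, z) ≠ L s(x, t) := by
    have := hWG z x t hxz.symm hxt (fun h => htyz.2 h.symm)
    rwa [Sym2.eq_swap] at this
  obtain ⟨a, b, ha, hb, hab⟩ := hF.2.2.1 x z hxz
  obtain ⟨c, hc, hcw⟩ := exists_wedge_p hp hWz (hL2 x z hxz) ha hb
  obtain ⟨a', b', ha', hb', hab'⟩ := hF.2.2.1 x t hxt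
  obtain ⟨d, hd, hdw⟩ := exists_wedge_p hp hWt (hL2 x t hxt) ha' hb'
  have hFz : F x z = wedgeE p c := hab.trans hcw
  have hFt : F x t = wedgeE p d := hab'.trans hdw
  have hsum0 : wedgeE p (d + c) = 0 := by
    rw [wedgeE_add_right, ← hFz, ← hFt, hsplit]
  have hdc : d + c ∈ Submodule.span ℝ ({p} : Set V3) := (wedgeE_zero_iff hp).mp hsum0
  have hdmem : d ∈ L s(x, z) ⊓ L s(x, t) := by
    refine ⟨?_, hd⟩
    have h1 : d + c ∈ L s(x, z) := by
      have hsp : Submodule.span ℝ ({p} : Set V3) ≤ L s(x, z) := by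
        rw [Submodule.span_le]; rintro q rfl; exact hWz
      exact hsp hdc
    simpa using (L s(x, z)).sub_mem h1 hc
  have hd_span : d ∈ Submodule.span ℝ ({p} : Set V3) :=
    inf_le_span hp hWz hWt (hL2 x z hxz) (hL2 x t hxt) hWne hdmem
  have hFt0 : F x t = 0 := by
    rw [hFt]
    exact (wedgeE_zero_iff hp).mpr hd_span
  rw [hFt0, zero_add] at hsplit
  exact hsplit

lemma F_edge_ne_zero {V : Type} [Fintype V] [DecidableEq V]
    (G : SimpleGraph V) [DecidableRel G.Adj] {p : V3} (hp : p ≠ 0)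
    (L : Sym2 V → Submodule ℝ V3)
    (htree : G.IsTree) (hdeg : ∀ v, G.degree v = 1 ∨ G.degree v = 3)
    (hL2 : ∀ u v, G.Adj u v → Module.finrank ℝ (L s(u, v)) = 2)
    (hLp : ∀ u v, G.Adj u v → p ∈ L s(u, v))
    (hWG : WeaklyGeneric G L)
    {F : V → V → Form} (hF : IsEqTreeLoad G L F) (hF0 : F ≠ 0)
    {a b : V} (hab : G.Adj a b) : F a b ≠ 0 := by
  intro h0
  set Z : V → Prop := fun x => ∀ y, G.Adj x y → F x y = 0 with hZ
  have extend : ∀ x y, G.Adj x y → F x y = 0 → Z x := by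
    intro x y hxy hxy0
    rcases hdeg x with h1 | h3
    · intro c hc
      obtain ⟨w, hw⟩ := Finset.card_eq_one.mp (h1 : (G.neighborFinset x).card = 1)
      have hcw : c ∈ G.neighborFinset x := (SimpleGraph.mem_neighborFinset G x c).mpr hc
      have hyw : y ∈ G.neighborFinset x := (SimpleGraph.mem_neighborFinset G x y).mpr hxy
      rw [hw, Finset.mem_singleton] at hcw hyw
      rw [hcw, ← hyw]
      exact hxy0
    · intro c hc
      exact local_prop G hp L hL2 hLp hWG hF h3 hxy hxy0 hc
  have step : ∀ x y, Z x → G.Adj x y → Z y := by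
    intro x y hZx hxy
    have hyx : F y x = 0 := by rw [hF.1 y x, hZx y hxy, neg_zero]
    exact extend y x hxy.symm hyx
  have key : ∀ (c d : V) (w : G.Walk c d), Z c → Z d := by
    intro c d w
    induction w with
    | nil => exact id
    | cons h q ih => exact fun hc => ih (step _ _ hc h)
  have hZall : ∀ x, Z x := by
    intro x
    obtain ⟨w⟩ := htree.isConnected.preconnected a x
    exact key a x w (extend a b hab h0)
  apply hF0
  funext x y
  by_cases h : G.Adj x y
  · exact hZall x y h
  · exact hF.2.1 x y h

/-- In a weakly generic resolution scheme with a nonzero equilibrium force-load `F`, for every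
interior edge `uv` the sum of the forces at the leaves lying in the connected component of `u`
in `T ∖ {uv}` is nonzero and has line of force `L(uv)`. -/
theorem stmt15 {V : Type} [Fintype V] [DecidableEq V] [Nonempty V]
    (G : SimpleGraph V) [DecidableRel G.Adj] (p : V3) (hp : p ≠ 0)
    (L : Sym2 V → Submodule ℝ V3)
    (htree : G.IsTree) (hdeg : ∀ v, G.degree v = 1 ∨ G.degree v = 3)
    (hL2 : ∀ u v, G.Adj u v → Module.finrank ℝ (L s(u, v)) = 2)
    (hLp : ∀ u v, G.Adj u v → p ∈ L s(u, v))
    (hWG : WeaklyGeneric G L)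
    (u v : V) (huv : G.Adj u v) (hu3 : G.degree u = 3) (hv3 : G.degree v = 3)
    (F : V → V → Form) (hF : IsEqTreeLoad G L F) (hF0 : F ≠ 0) :
    (∑ w ∈ Finset.univ.filter
        (fun w => G.degree w = 1 ∧ (G.deleteEdges {s(u, v)}).Reachable u w),
        (∑ w' : V, F w' w)) ≠ 0 ∧
    AlongSub
      (∑ w ∈ Finset.univ.filter
        (fun w => G.degree w = 1 ∧ (G.deleteEdges {s(u, v)}).Reachable u w),
        (∑ w' : V, F w' w))
      (L s(u, v)) := by
  set D := G.deleteEdges {s(u, v)} with hD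
  set S : Finset V := Finset.univ.filter (fun w => D.Reachable u w) with hS
  set S' : Finset V := Finset.univ.filter (fun w => ¬ D.Reachable u w) with hS'
  have huS : u ∈ S := Finset.mem_filter.mpr ⟨Finset.mem_univ u, SimpleGraph.Reachable.refl u⟩
  have hvS : v ∉ S := by
    have hbridge : G.IsBridge s(u, v) :=
      (SimpleGraph.isAcyclic_iff_forall_adj_isBridge.mp htree.IsAcyclic) huv
    intro hv
    exact hbridge ((Finset.mem_filter.mp hv).2)
  have cross : ∀ w' w, w ∈ S → w' ∉ S → F w' w ≠ 0 → w' = v ∧ w = u := by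
    intro w' w hw hw' hFne
    have hadj : G.Adj w' w := by
      by_contra h
      exact hFne (hF.2.1 w' w h)
    by_cases he : s(w', w) = s(u, v)
    · rcases Sym2.eq_iff.mp he with ⟨rfl, rfl⟩ | ⟨rfl, rfl⟩
      · exact absurd hw hvS
      · exact ⟨rfl, rfl⟩
    · exfalso
      apply hw'
      have hDadj : D.Adj w' w := by
        rw [hD, SimpleGraph.deleteEdges_adj]
        exact ⟨hadj, by simpa using he⟩
      have hr : D.Reachable u w := (Finset.mem_filter.mp hw).2
      exact Finset.mem_filter.mpr ⟨Finset.mem_univ _, hr.trans hDadj.symm.reachable⟩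
  -- Step 1: the sum over the leaves in the component equals the sum over the whole component
  have hstep1 : (∑ w ∈ Finset.univ.filter
        (fun w => G.degree w = 1 ∧ D.Reachable u w), (∑ w' : V, F w' w))
      = ∑ w ∈ S, ∑ w' : V, F w' w := by
    apply Finset.sum_subset
    · intro w hw
      exact Finset.mem_filter.mpr ⟨Finset.mem_univ _, (Finset.mem_filter.mp hw).2.2⟩
    · intro w hw hw'
      have hdw : G.degree w ≠ 1 := by
        intro h1
        exact hw' (Finset.mem_filter.mpr ⟨Finset.mem_univ _, h1, (Finset.mem_filter.mp hw).2⟩)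
      have h3 : G.degree w = 3 := (hdeg w).resolve_left hdw
      calc (∑ w' : V, F w' w) = ∑ w' : V, -(F w w') := Finset.sum_congr rfl
            (fun w' _ => hF.1 w' w)
        _ = -(∑ w' : V, F w w') := by rw [Finset.sum_neg_distrib]
        _ = 0 := by rw [hF.2.2.2 w h3, neg_zero]
  -- Step 2: split the inner sum
  have hstep2 : (∑ w ∈ S, ∑ w' : V, F w' w)
      = (∑ w ∈ S, ∑ w' ∈ S, F w' w) + ∑ w ∈ S, ∑ w' ∈ S', F w' w := by
    rw [← Finset.sum_add_distrib]
    apply Finset.sum_congr rfl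
    intro w _
    exact (Finset.sum_filter_add_sum_filter_not Finset.univ _ _).symm
  have hA : (∑ w ∈ S, ∑ w' ∈ S, F w' w) = 0 := by
    have hneg : (∑ w ∈ S, ∑ w' ∈ S, F w' w) = -(∑ w ∈ S, ∑ w' ∈ S, F w' w) := by
      conv_lhs => rw [Finset.sum_comm]
      calc (∑ w' ∈ S, ∑ w ∈ S, F w' w) = ∑ w' ∈ S, ∑ w ∈ S, -(F w w') :=
            Finset.sum_congr rfl (fun w' _ => Finset.sum_congr rfl (fun w _ => hF.1 w' w))
        _ = -(∑ w' ∈ S, ∑ w ∈ S, F w w') := by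
            simp only [Finset.sum_neg_distrib]
        _ = -(∑ w ∈ S, ∑ w' ∈ S, F w' w) := by rw [Finset.sum_comm]
    funext x y
    have := congrFun (congrFun hneg x) y
    simp only [Pi.neg_apply] at this ⊢
    have h0 : (0 : Form) x y = 0 := rfl
    rw [show ((0 : Form) x y) = (0:ℝ) from rfl]
    linarith [this]
  have hvS' : v ∈ S' := by
    refine Finset.mem_filter.mpr ⟨Finset.mem_univ _, ?_⟩
    intro hr
    exact hvS (Finset.mem_filter.mpr ⟨Finset.mem_univ _, hr⟩)
  have hB : (∑ w ∈ S, ∑ w' ∈ S', F w' w) = F v u := by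
    rw [Finset.sum_eq_single_of_mem u huS]
    · rw [Finset.sum_eq_single_of_mem v hvS']
      intro w' hw' hne
      by_contra hFne
      have hw'S : w' ∉ S := by
        intro h
        exact (Finset.mem_filter.mp hw').2 (Finset.mem_filter.mp h).2
      exact hne (cross w' u huS hw'S hFne).1
    · intro w hw hne
      apply Finset.sum_eq_zero
      intro w' hw'
      by_contra hFne
      have hw'S : w' ∉ S := by
        intro h
        exact (Finset.mem_filter.mp hw').2 (Finset.mem_filter.mp h).2
      exact hne (cross w' w hw hw'S hFne).2
  have htotal : (∑ w ∈ Finset.univ.filter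
        (fun w => G.degree w = 1 ∧ D.Reachable u w), (∑ w' : V, F w' w)) = F v u := by
    rw [hstep1, hstep2, hA, zero_add, hB]
  rw [htotal]
  constructor
  · exact F_edge_ne_zero G hp L htree hdeg hL2 hLp hWG hF hF0 huv.symm
  · have := hF.2.2.1 v u huv.symm
    rwa [Sym2.eq_swap] at this
end
end
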